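/- arXiv:1304.4685 — 2 statements merged into one kernel-verified Lean document; each statement's English description precedes it below -/
import Mathlib

section
/- Let (x,y,z,λ,γ) be a strictly feasible point, let (ẋ,ẏ,ż,λ̇,γ̇) and (ẍ,ÿ,z̈,λ̈,γ̈) be first- and second-derivative directions at that point, and for α ∈ [0,π/2] define the arc point x(α), y(α), z(α), λ(α), γ(α). Then x(α)+y(α) = e, x(α)−z(α) = −e, and Hx(α)+c+λ(α)−γ(α) = 0. -/
open scoped BigOperators

noncomputable section

/-- Euclidean dot product of two vectors. -/
def dotp {ι : Type*} [Fintype ι] (u v : ι → ℝ) : ℝ := ∑ i, u i * v i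

/-- Euclidean norm of a vector. -/
def vecEnorm {ι : Type*} [Fintype ι] (u : ι → ℝ) : ℝ := Real.sqrt (∑ i, (u i) ^ 2)

/-- Strict feasibility for the box-constrained QP KKT system. -/
def StrictlyFeasible {n : ℕ} (H : Matrix (Fin n) (Fin n) ℝ)
    (c x y z lam gam : Fin n → ℝ) : Prop :=
  H.mulVec x + c + lam - gam = 0 ∧
  x + y = (fun _ => 1) ∧
  x - z = (fun _ => -1) ∧
  (∀ i, 0 < y i) ∧ (∀ i, 0 < z i) ∧ (∀ i, 0 < lam i) ∧ (∀ i, 0 < gam i)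

/-- The central-path neighborhood `N₂(θ)`. -/
def N2 {n : ℕ} (H : Matrix (Fin n) (Fin n) ℝ) (c : Fin n → ℝ) (θ : ℝ)
    (x y z lam gam : Fin n → ℝ) : Prop :=
  StrictlyFeasible H c x y z lam gam ∧
  vecEnorm (Sum.elim y z * Sum.elim lam gam
      - fun _ => dotp (Sum.elim y z) (Sum.elim lam gam) / (2 * (n : ℝ)))
    ≤ θ * (dotp (Sum.elim y z) (Sum.elim lam gam) / (2 * (n : ℝ)))

/-- First-derivative direction of the arc at a point `(x,y,z,λ,γ)`. -/
def FirstDir {n : ℕ} (H : Matrix (Fin n) (Fin n) ℝ)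
    (y z lam gam xd yd zd ld gd : Fin n → ℝ) : Prop :=
  H.mulVec xd + ld - gd = 0 ∧ yd = -xd ∧ zd = xd ∧
  lam * yd + y * ld = lam * y ∧ gam * zd + z * gd = gam * z

/-- Second-derivative direction of the arc at a point `(x,y,z,λ,γ)`. -/
def SecondDir {n : ℕ} (H : Matrix (Fin n) (Fin n) ℝ)
    (y z lam gam yd zd ld gd xdd ydd zdd ldd gdd : Fin n → ℝ) : Prop :=
  H.mulVec xdd + ldd - gdd = 0 ∧ ydd = -xdd ∧ zdd = xdd ∧
  lam * ydd + y * ldd = (-2 : ℝ) • (ld * yd) ∧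
  gam * zdd + z * gdd = (-2 : ℝ) • (gd * zd)

/-- The ellipse (arc) approximation point: `v(α) = v - v̇·sin α + v̈·(1 - cos α)`. -/
def arc {n : ℕ} (v vd vdd : Fin n → ℝ) (α : ℝ) : Fin n → ℝ :=
  v - Real.sin α • vd + (1 - Real.cos α) • vdd

/-- Corrector (centering) direction at a point `(x,y,z,λ,γ)` with target `μ`. -/
def CorrDir {n : ℕ} (H : Matrix (Fin n) (Fin n) ℝ)
    (y z lam gam dx dy dz dl dg : Fin n → ℝ) (mu : ℝ) : Prop :=
  H.mulVec dx + dl - dg = 0 ∧ dy = -dx ∧ dz = dx ∧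
  lam * dy + y * dl = (fun _ => mu) - lam * y ∧
  gam * dz + z * dg = (fun _ => mu) - gam * z

/-! The equality constraints are affine, and the equations defining `v̇` and `v̈` contain their
homogeneous parts; since `v(α)` is `v` plus a linear combination of `v̇` and `v̈`, each constraint
holds along the whole arc, for every `α`. -/

section Arc

variable {n : ℕ}

theorem arc_add (u ud udd v vd vdd : Fin n → ℝ) (α : ℝ) :
    arc (u + v) (ud + vd) (udd + vdd) α = arc u ud udd α + arc v vd vdd α := by
  simp only [arc, smul_add]
  abel

theorem arc_sub (u ud udd v vd vdd : Fin n → ℝ) (α : ℝ) :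
    arc (u - v) (ud - vd) (udd - vdd) α = arc u ud udd α - arc v vd vdd α := by
  simp only [arc, smul_sub]
  abel

@[simp]
theorem arc_zero_zero (v : Fin n → ℝ) (α : ℝ) : arc v 0 0 α = v := by
  simp [arc]

theorem map_arc {m : ℕ} (L : (Fin n → ℝ) →ₗ[ℝ] Fin m → ℝ) (v vd vdd : Fin n → ℝ) (α : ℝ) :
    L (arc v vd vdd α) = arc (L v) (L vd) (L vdd) α := by
  simp only [arc, map_add, map_sub, map_smul]

theorem mulVec_arc {m : ℕ} (A : Matrix (Fin m) (Fin n) ℝ) (v vd vdd : Fin n → ℝ) (α : ℝ) :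
    A.mulVec (arc v vd vdd α) = arc (A.mulVec v) (A.mulVec vd) (A.mulVec vdd) α :=
  map_arc A.mulVecLin v vd vdd α

end Arc

theorem stmt_2_general {n : ℕ} (H : Matrix (Fin n) (Fin n) ℝ)
    (c x y z lam gam : Fin n → ℝ)
    (hfeas : StrictlyFeasible H c x y z lam gam)
    (xd yd zd ld gd : Fin n → ℝ)
    (hfd : FirstDir H y z lam gam xd yd zd ld gd)
    (xdd ydd zdd ldd gdd : Fin n → ℝ)
    (hsd : SecondDir H y z lam gam yd zd ld gd xdd ydd zdd ldd gdd)
    (α : ℝ) :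
    arc x xd xdd α + arc y yd ydd α = (fun _ => 1) ∧
    arc x xd xdd α - arc z zd zdd α = (fun _ => -1) ∧
    H.mulVec (arc x xd xdd α) + c + arc lam ld ldd α - arc gam gd gdd α = 0 := by
  obtain ⟨hdual, hupper, hlower, -⟩ := hfeas
  obtain ⟨hdual₁, rfl, rfl, -⟩ := hfd
  obtain ⟨hdual₂, rfl, rfl, -⟩ := hsd
  refine ⟨?_, ?_, ?_⟩
  · rw [← arc_add, hupper, add_neg_cancel, add_neg_cancel, arc_zero_zero]
  · rw [← arc_sub, hlower, sub_self, sub_self, arc_zero_zero]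
  · rw [mulVec_arc, ← arc_zero_zero c α, ← arc_add, ← arc_add, ← arc_sub, hdual,
      add_zero, add_zero, hdual₁, hdual₂, arc_zero_zero]

/-- the arc point stays on the affine constraints:
`x(α)+y(α)=e`, `x(α)−z(α)=−e`, `Hx(α)+c+λ(α)−γ(α)=0`. -/
theorem stmt_2 {n : ℕ} (hn : 0 < n) (H : Matrix (Fin n) (Fin n) ℝ) (hH : H.PosDef)
    (c x y z lam gam : Fin n → ℝ)
    (hfeas : StrictlyFeasible H c x y z lam gam)
    (xd yd zd ld gd : Fin n → ℝ)
    (hfd : FirstDir H y z lam gam xd yd zd ld gd)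
    (xdd ydd zdd ldd gdd : Fin n → ℝ)
    (hsd : SecondDir H y z lam gam yd zd ld gd xdd ydd zdd ldd gdd)
    (α : ℝ) (hα : α ∈ Set.Icc 0 (Real.pi / 2)) :
    arc x xd xdd α + arc y yd ydd α = (fun _ => 1) ∧
    arc x xd xdd α - arc z zd zdd α = (fun _ => -1) ∧
    H.mulVec (arc x xd xdd α) + c + arc lam ld ldd α - arc gam gd gdd α = 0 :=
  stmt_2_general H c x y z lam gam hfeas xd yd zd ld gd hfd xdd ydd zdd ldd gdd hsd α

end
end

section
/- Suppose there exists a strictly feasible point for the box-constrained QP, i.e., some (x̄,ȳ,z̄,λ̄,γ̄) with Hx̄+c+λ̄−γ̄=0, x̄+ȳ=e, x̄−z̄=−e, and ȳ,z̄,λ̄,γ̄ componentwise positive. Then for every K ≥ 0 the set of feasible points with bounded duality gap, { (x,y,z,λ,γ) : Hx+c+λ−γ=0, x+y=e, x−z=−e, y,z,λ,γ ≥ 0 componentwise, and yᵀλ + zᵀγ ≤ K }, is a bounded subset of ℝ^{5n}. -/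
/-!
For two solutions of the equality constraints, `d = x - x̄` gives `y - ȳ = -d` and `z - z̄ = d`,
and `H d = (γ - γ̄) - (λ - λ̄)`, so `0 ≤ dᵀ H d = (y - ȳ)ᵀ(λ - λ̄) + (z - z̄)ᵀ(γ - γ̄)`.
Expanding and dropping the nonnegative cross terms `yᵀλ̄, zᵀγ̄` bounds `ȳᵀλ + z̄ᵀγ` by
`K + ȳᵀλ̄ + z̄ᵀγ̄`; as `ȳ, z̄ > 0` this bounds each `λᵢ, γᵢ`, while the box bounds `x, y, z`.
-/

open scoped BigOperators

noncomputable section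

open Matrix

theorem kkt_sub_dotProduct_sub_nonneg {ι : Type*} [Fintype ι] {H : Matrix ι ι ℝ}
    (hH : H.PosSemidef)
    {c u l x y z lam gam x' y' z' lam' gam' : ι → ℝ}
    (hstat : H *ᵥ x + c + lam - gam = 0) (hstat' : H *ᵥ x' + c + lam' - gam' = 0)
    (hup : x + y = u) (hup' : x' + y' = u) (hlow : x - z = l) (hlow' : x' - z' = l) :
    0 ≤ (y - y') ⬝ᵥ (lam - lam') + (z - z') ⬝ᵥ (gam - gam') := by
  have hy : y - y' = -(x - x') := by rw [← hup'] at hup; linear_combination hup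
  have hz : z - z' = x - x' := by rw [← hlow'] at hlow; linear_combination -hlow
  have hHx : H *ᵥ (x - x') = (gam - gam') - (lam - lam') := by
    rw [mulVec_sub]; linear_combination hstat - hstat'
  calc 0 ≤ star (x - x') ⬝ᵥ (H *ᵥ (x - x')) := hH.dotProduct_mulVec_nonneg _
    _ = _ := by rw [star_trivial, hHx, hy, hz, dotProduct_sub, neg_dotProduct]; ring

theorem dotProduct_add_le_of_sub_dotProduct_sub_nonneg {ι : Type*} [Fintype ι]
    {y z lam gam y' z' lam' gam' : ι → ℝ}
    (h : 0 ≤ (y - y') ⬝ᵥ (lam - lam') + (z - z') ⬝ᵥ (gam - gam'))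
    (hy : 0 ≤ y) (hz : 0 ≤ z) (hlam' : 0 ≤ lam') (hgam' : 0 ≤ gam') :
    y' ⬝ᵥ lam + z' ⬝ᵥ gam ≤ y ⬝ᵥ lam + z ⬝ᵥ gam + (y' ⬝ᵥ lam' + z' ⬝ᵥ gam') := by
  simp only [sub_dotProduct, dotProduct_sub] at h
  linarith [dotProduct_nonneg_of_nonneg hy hlam', dotProduct_nonneg_of_nonneg hz hgam']

theorem le_div_of_dotProduct_le {ι : Type*} [Fintype ι] {w v : ι → ℝ} {B : ℝ}
    (hw : ∀ i, 0 < w i) (hv : 0 ≤ v) (h : w ⬝ᵥ v ≤ B) (i : ι) : v i ≤ B / w i := by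
  rw [le_div_iff₀ (hw i), mul_comm]
  exact (Finset.single_le_sum (fun j _ => mul_nonneg (hw j).le (hv j))
    (Finset.mem_univ i)).trans h

theorem abs_le_two_of_box {x y z : ℝ} (hup : x + y = 1) (hlow : x - z = -1)
    (hy : 0 ≤ y) (hz : 0 ≤ z) : |x| ≤ 2 ∧ |y| ≤ 2 ∧ |z| ≤ 2 := by
  refine ⟨abs_le.2 ⟨?_, ?_⟩, abs_le.2 ⟨?_, ?_⟩, abs_le.2 ⟨?_, ?_⟩⟩ <;> linarith

theorem stmt_18_general {n : ℕ} (H : Matrix (Fin n) (Fin n) ℝ) (hH : H.PosDef)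
    (c : Fin n → ℝ)
    (hexists : ∃ xb yb zb lb gb : Fin n → ℝ, StrictlyFeasible H c xb yb zb lb gb) :
    ∀ K : ℝ, 0 ≤ K → ∃ M : ℝ,
      ∀ x y z lam gam : Fin n → ℝ,
        H.mulVec x + c + lam - gam = 0 →
        x + y = (fun _ => 1) →
        x - z = (fun _ => -1) →
        (∀ i, 0 ≤ y i) → (∀ i, 0 ≤ z i) → (∀ i, 0 ≤ lam i) → (∀ i, 0 ≤ gam i) →
        dotp y lam + dotp z gam ≤ K →
        ∀ i, |x i| ≤ M ∧ |y i| ≤ M ∧ |z i| ≤ M ∧ |lam i| ≤ M ∧ |gam i| ≤ M := by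
  obtain ⟨xb, yb, zb, lb, gb, hstatb, hupb, hlowb, hyb, hzb, hlb, hgb⟩ := hexists
  intro K _
  set B := K + (yb ⬝ᵥ lb + zb ⬝ᵥ gb)
  obtain ⟨M, hM⟩ := Finite.bddAbove_range fun i => max (B / yb i) (B / zb i)
  refine ⟨max 2 M, fun x y z lam gam hstat hup hlow hy hz hlam hgam hgap i => ?_⟩
  have hcross : yb ⬝ᵥ lam + zb ⬝ᵥ gam ≤ B := by
    have := dotProduct_add_le_of_sub_dotProduct_sub_nonneg
      (kkt_sub_dotProduct_sub_nonneg hH.posSemidef hstat hstatb hup hupb hlow hlowb)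
      hy hz (fun i => (hlb i).le) (fun i => (hgb i).le)
    exact this.trans (add_le_add_left hgap _)
  have hlam_le : lam i ≤ B / yb i := le_div_of_dotProduct_le hyb hlam
    (by linarith [dotProduct_nonneg_of_nonneg (w := gam) (fun j => (hzb j).le) hgam]) i
  have hgam_le : gam i ≤ B / zb i := le_div_of_dotProduct_le hzb hgam
    (by linarith [dotProduct_nonneg_of_nonneg (w := lam) (fun j => (hyb j).le) hlam]) i
  have hMi : max (B / yb i) (B / zb i) ≤ M := hM ⟨i, rfl⟩
  obtain ⟨hx, hy2, hz2⟩ := abs_le_two_of_box (congrFun hup i) (congrFun hlow i) (hy i) (hz i)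
  rw [abs_of_nonneg (hlam i), abs_of_nonneg (hgam i)]
  exact ⟨le_max_of_le_left hx, le_max_of_le_left hy2, le_max_of_le_left hz2,
    le_max_of_le_right ((le_max_of_le_left hlam_le).trans hMi),
    le_max_of_le_right ((le_max_of_le_right hgam_le).trans hMi)⟩

/-- if a strictly feasible point exists, then for every `K ≥ 0`, the set
of feasible points with duality gap `yᵀλ + zᵀγ ≤ K` is bounded. -/
theorem stmt_18 {n : ℕ} (hn : 0 < n) (H : Matrix (Fin n) (Fin n) ℝ) (hH : H.PosDef)
    (c : Fin n → ℝ)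
    (hexists : ∃ xb yb zb lb gb : Fin n → ℝ, StrictlyFeasible H c xb yb zb lb gb) :
    ∀ K : ℝ, 0 ≤ K → ∃ M : ℝ,
      ∀ x y z lam gam : Fin n → ℝ,
        H.mulVec x + c + lam - gam = 0 →
        x + y = (fun _ => 1) →
        x - z = (fun _ => -1) →
        (∀ i, 0 ≤ y i) → (∀ i, 0 ≤ z i) → (∀ i, 0 ≤ lam i) → (∀ i, 0 ≤ gam i) →
        dotp y lam + dotp z gam ≤ K →
        ∀ i, |x i| ≤ M ∧ |y i| ≤ M ∧ |z i| ≤ M ∧ |lam i| ≤ M ∧ |gam i| ≤ M :=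
  stmt_18_general H hH c hexists

end
end
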